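/- arXiv:2302.04640 — 2 statements merged into one kernel-verified Lean document; each statement's English description precedes it below -/
import Mathlib

section
/- For all integers k ≥ 5, 6*F_k² - F_{2k+2} = (1/5)*(3*F_{2k-1} - 4*F_{2k-2} - 12*(-1)^k), and this quantity is nonnegative. Equivalently, 30*F_k² - 5*F_{2k+2} = 3*F_{2k-1} - 4*F_{2k-2} - 12*(-1)^k ≥ 0. -/
lemma cassini_aux : ∀ n : ℕ, ((Nat.fib (n+1) : ℤ))^2 - Nat.fib n * Nat.fib (n+2) = (-1 : ℤ)^n := by
  intro n
  induction n with
  | zero => simp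
  | succ n ih =>
    have h := Nat.fib_add_two (n := n)
    have h2 := Nat.fib_add_two (n := n+1)
    push_cast [h2, h] at *
    ring_nf at ih ⊢
    linarith

lemma fib_ratio : ∀ m : ℕ, 3 * Nat.fib (m+4) ≤ 5 * Nat.fib (m+3) ∧ 3 * Nat.fib (m+3) ≤ 2 * Nat.fib (m+4) := by
  intro m
  induction m with
  | zero => norm_num [Nat.fib]
  | succ m ih =>
    have h := Nat.fib_add_two (n := m+3)
    simp only [show m+1+4 = m+3+2 from by ring, show m+1+3 = m+3+1 from by ring,
      show m+4 = m+3+1 from by ring] at *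
    omega

/-- For `k ≥ 5`, `5*(6*F_k² - F_{2k+2}) = 3*F_{2k-1} - 4*F_{2k-2} - 12*(-1)^k`,
and `6*F_k² - F_{2k+2} ≥ 0`. -/
theorem fib_identity_iii (k : ℕ) (hk : 5 ≤ k) :
    5 * (6 * (Nat.fib k : ℤ) ^ 2 - (Nat.fib (2 * k + 2) : ℤ))
      = 3 * (Nat.fib (2 * k - 1) : ℤ) - 4 * (Nat.fib (2 * k - 2) : ℤ) - 12 * (-1 : ℤ) ^ k ∧
    0 ≤ 6 * (Nat.fib k : ℤ) ^ 2 - (Nat.fib (2 * k + 2) : ℤ) := by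
  obtain ⟨m, rfl⟩ : ∃ m, k = m + 5 := ⟨k - 5, by omega⟩
  rw [show 2 * (m + 5) - 2 = 2 * (m+3) + 2 from by omega,
      show 2 * (m + 5) - 1 = 2 * (m+4) + 1 from by omega,
      show 2 * (m + 5) + 2 = 2 * (m+5) + 2 from rfl,
      Nat.fib_two_mul_add_two, Nat.fib_two_mul_add_one, Nat.fib_two_mul_add_two]
  simp only [show m+5+1 = m+6 from by ring, show m+4+1 = m+5 from by ring,
    show m+3+1 = m+4 from by ring]
  have H5 : (Nat.fib (m+5) : ℤ) = Nat.fib (m+4) + Nat.fib (m+3) := by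
    rw [show m+5 = m+3+2 from by ring, Nat.fib_add_two]; push_cast; ring
  have H6 : (Nat.fib (m+6) : ℤ) = 2 * Nat.fib (m+4) + Nat.fib (m+3) := by
    rw [show m+6 = m+4+2 from by ring, Nat.fib_add_two]
    push_cast
    rw [show m+4+1 = m+5 from by ring, H5]; ring
  have hcas := cassini_aux (m+4)
  simp only [show m+4+1 = m+5 from by ring, show m+4+2 = m+6 from by ring] at hcas
  rw [H5, H6, show ((-1:ℤ))^(m+4) = (-1:ℤ)^m from by ring] at hcas
  have hrat := (fib_ratio m).1
  have hr1 : 3 * (Nat.fib (m+4) : ℤ) ≤ 5 * (Nat.fib (m+3) : ℤ) := by exact_mod_cast hrat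
  have hcp : (1:ℤ) ≤ (Nat.fib (m+3) : ℤ) := by
    exact_mod_cast Nat.fib_pos.mpr (by omega : 0 < m+3)
  have hdc : (Nat.fib (m+3) : ℤ) ≤ (Nat.fib (m+4) : ℤ) := by
    exact_mod_cast Nat.fib_le_fib_succ (n := m+3)
  rw [show ((-1:ℤ))^(m+5) = -(-1:ℤ)^m from by ring]
  push_cast
  rw [H5, H6]
  constructor
  · nlinarith [hcas]
  · nlinarith [hr1, hcp, hdc]
end

section
/- For all integers k ≥ 1, ρ(2k+2, k+2) := (F_{2k+2} - F_{k+2} - 1)*F_k - (F_{k+2} - 1)*F_{2k} equals (1/5)*(-L_{2k-2} - 5*F_k + 5*F_{-k} + 3*(-1)^k), and this quantity is negative. -/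
/-- Two solutions of the Fibonacci recurrence agreeing at 0 and 1 are equal. -/
lemma rho_uniq (g h : ℤ → ℤ)
    (hg : ∀ n : ℤ, g n = g (n - 1) + g (n - 2))
    (hh : ∀ n : ℤ, h n = h (n - 1) + h (n - 2))
    (h0 : g 0 = h 0) (h1 : g 1 = h 1) : ∀ n : ℤ, g n = h n := by
  have key : ∀ n : ℤ, g n = h n ∧ g (n + 1) = h (n + 1) := by
    intro n
    induction n using Int.induction_on with
    | zero => exact ⟨h0, h1⟩
    | succ i ih =>
      refine ⟨ih.2, ?_⟩
      have hg2 := hg ((i : ℤ) + 1 + 1)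
      have hh2 := hh ((i : ℤ) + 1 + 1)
      simp only [show ((i : ℤ) + 1 + 1 - 1) = (i : ℤ) + 1 by ring,
        show ((i : ℤ) + 1 + 1 - 2) = (i : ℤ) by ring] at hg2 hh2
      rw [hg2, hh2, ih.1, ih.2]
    | pred i ih =>
      refine ⟨?_, by rw [show (-(i : ℤ) - 1 + 1) = -(i : ℤ) by ring]; exact ih.1⟩
      have hg2 := hg (-(i : ℤ) + 1)
      have hh2 := hh (-(i : ℤ) + 1)
      simp only [show (-(i : ℤ) + 1 - 1) = -(i : ℤ) by ring,
        show (-(i : ℤ) + 1 - 2) = -(i : ℤ) - 1 by ring] at hg2 hh2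
      have e1 : g (-(i : ℤ) - 1) = g (-(i : ℤ) + 1) - g (-(i : ℤ)) := by linarith
      have e2 : h (-(i : ℤ) - 1) = h (-(i : ℤ) + 1) - h (-(i : ℤ)) := by linarith
      rw [e1, e2, ih.1, ih.2]
  exact fun n => (key n).1

/-- For `k ≥ 1`, with Fibonacci `F` and Lucas `L` extended to all integers,
`5*ρ(2k+2,k+2) = -L_{2k-2} - 5*F_k + 5*F_{-k} + 3*(-1)^k` and `ρ(2k+2,k+2) < 0`,
where `ρ(2k+2,k+2) = (F_{2k+2} - F_{k+2} - 1)*F_k - (F_{k+2} - 1)*F_{2k}`. -/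
theorem rho_even_case (F L : ℤ → ℤ)
    (hF0 : F 0 = 0) (hF1 : F 1 = 1) (hFrec : ∀ n : ℤ, F n = F (n - 1) + F (n - 2))
    (hL0 : L 0 = 2) (hL1 : L 1 = 1) (hLrec : ∀ n : ℤ, L n = L (n - 1) + L (n - 2)) :
    ∀ k : ℤ, 1 ≤ k →
      5 * ((F (2 * k + 2) - F (k + 2) - 1) * F k - (F (k + 2) - 1) * F (2 * k))
        = -L (2 * k - 2) - 5 * F k + 5 * F (-k) + 3 * (Int.negOnePow k : ℤ) ∧
      (F (2 * k + 2) - F (k + 2) - 1) * F k - (F (k + 2) - 1) * F (2 * k) < 0 := by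
  -- basic shifted recurrences
  have hF' : ∀ n : ℤ, F (n + 2) = F (n + 1) + F n := by
    intro n
    have h := hFrec (n + 2)
    simpa only [show (n + 2 - 1 : ℤ) = n + 1 by ring, show (n + 2 - 2 : ℤ) = n by ring] using h
  have hFm1 : F (-1) = 1 := by
    have h := hFrec 1
    norm_num at h
    linarith
  have hF2 : F 2 = 1 := by
    have h := hF' 0
    simp only [zero_add] at h
    rw [hF0, hF1] at h; linarith
  have hF3 : F 3 = 2 := by
    have h := hF' 1
    rw [show (1 + 2 : ℤ) = 3 by norm_num, show (1 + 1 : ℤ) = 2 by norm_num] at h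
    rw [hF1, hF2] at h; linarith
  -- Lucas in terms of Fibonacci
  have hL : ∀ n : ℤ, L n = F (n + 1) + F (n - 1) := by
    intro n
    refine rho_uniq L (fun n => F (n + 1) + F (n - 1)) hLrec ?_ ?_ ?_ n
    · intro m
      have h1 := hFrec (m + 1)
      have h2 := hFrec (m - 1)
      simp only [show (m + 1 - 1 : ℤ) = m by ring, show (m + 1 - 2 : ℤ) = m - 1 by ring,
        show (m - 1 - 1 : ℤ) = m - 2 by ring, show (m - 1 - 2 : ℤ) = m - 3 by ring] at h1 h2
      simp only [show (m - 1 + 1 : ℤ) = m by ring, show (m - 1 - 1 : ℤ) = m - 2 by ring,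
        show (m - 2 + 1 : ℤ) = m - 1 by ring, show (m - 2 - 1 : ℤ) = m - 3 by ring]
      linarith
    · norm_num [hL0, hF1, hFm1]
    · norm_num [hL1, hF2, hF0]
  -- Fibonacci at negated indices
  have hFneg : ∀ n : ℤ, F (-n) = -(Int.negOnePow n : ℤ) * F n := by
    have main : ∀ n : ℤ, F n = -(Int.negOnePow n : ℤ) * F (-n) := by
      intro n
      refine rho_uniq F (fun n => -(Int.negOnePow n : ℤ) * F (-n)) hFrec ?_ ?_ ?_ n
      · intro m
        have hrec := hFrec (-m + 2)
        simp only [show (-m + 2 - 1 : ℤ) = -m + 1 by ring,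
          show (-m + 2 - 2 : ℤ) = -m by ring] at hrec
        have e1 : (Int.negOnePow (m - 1) : ℤ) = -(Int.negOnePow (m - 2) : ℤ) := by
          have := Int.negOnePow_succ (m - 2)
          rw [show (m - 2 + 1 : ℤ) = m - 1 by ring] at this
          rw [this]; push_cast; ring
        have e2 : (Int.negOnePow m : ℤ) = (Int.negOnePow (m - 2) : ℤ) := by
          have h1 := Int.negOnePow_succ (m - 2)
          have h2 := Int.negOnePow_succ (m - 1)
          rw [show (m - 2 + 1 : ℤ) = m - 1 by ring] at h1
          rw [show (m - 1 + 1 : ℤ) = m by ring] at h2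
          rw [h2, h1]; push_cast; ring
        simp only [show (-(m - 1) : ℤ) = -m + 1 by ring, show (-(m - 2) : ℤ) = -m + 2 by ring,
          e1, e2]
        linear_combination ((Int.negOnePow (m - 2) : ℤ)) * hrec
      · simp [hF0]
      · simp only [Int.negOnePow_one]
        push_cast
        rw [hFm1, hF1]; ring
    intro n
    have h := main n
    rcases Int.units_eq_one_or (Int.negOnePow n) with hu | hu <;>
      rw [hu] at h ⊢ <;> push_cast at h ⊢ <;> linarith
  -- the inductive bundle
  have step : ∀ k : ℤ,
      (F (2 * k) = F k * (2 * F (k + 1) - F k) ∧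
       F (2 * k + 1) = F k ^ 2 + F (k + 1) ^ 2 ∧
       F (k + 1) ^ 2 - F (k + 1) * F k - F k ^ 2 = (Int.negOnePow k : ℤ) ∧
       1 ≤ F k ∧ 0 ≤ F (k - 1) ∧
       ((Int.negOnePow k : ℤ) = 1 → 1 ≤ F (k - 1)) ∧
       F (k + 1) - 2 * F k < 1 + (Int.negOnePow k : ℤ)) →
      (F (2 * (k + 1)) = F (k + 1) * (2 * F (k + 1 + 1) - F (k + 1)) ∧
       F (2 * (k + 1) + 1) = F (k + 1) ^ 2 + F (k + 1 + 1) ^ 2 ∧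
       F (k + 1 + 1) ^ 2 - F (k + 1 + 1) * F (k + 1) - F (k + 1) ^ 2
          = (Int.negOnePow (k + 1) : ℤ) ∧
       1 ≤ F (k + 1) ∧ 0 ≤ F (k + 1 - 1) ∧
       ((Int.negOnePow (k + 1) : ℤ) = 1 → 1 ≤ F (k + 1 - 1)) ∧
       F (k + 1 + 1) - 2 * F (k + 1) < 1 + (Int.negOnePow (k + 1) : ℤ)) := by
    intro k ih
    obtain ⟨h2k, h2k1, hcas, ha1, hk1, hpar, hlt⟩ := ih
    have hsucc : (Int.negOnePow (k + 1) : ℤ) = -(Int.negOnePow k : ℤ) := by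
      rw [Int.negOnePow_succ]; push_cast; ring
    have hk2 : F (k + 1 + 1) = F (k + 1) + F k := by
      have h := hF' k
      rw [show (k + 1 + 1 : ℤ) = k + 2 by ring]
      exact h
    have hkk : F (k + 1) = F k + F (k - 1) := by
      have h := hFrec (k + 1)
      simpa only [show (k + 1 - 1 : ℤ) = k by ring, show (k + 1 - 2 : ℤ) = k - 1 by ring]
        using h
    have e1 : F (2 * (k + 1)) = F (2 * k + 1) + F (2 * k) := by
      have h := hF' (2 * k)
      rw [show (2 * (k + 1) : ℤ) = 2 * k + 2 by ring]
      exact h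
    have e2 : F (2 * (k + 1) + 1) = F (2 * (k + 1)) + F (2 * k + 1) := by
      have h := hF' (2 * k + 1)
      rw [show (2 * (k + 1) + 1 : ℤ) = 2 * k + 1 + 2 by ring,
        show (2 * (k + 1) : ℤ) = 2 * k + 1 + 1 by ring]
      exact h
    refine ⟨?_, ?_, ?_, ?_, ?_, ?_, ?_⟩
    · rw [e1, hk2, h2k, h2k1]; ring
    · rw [e2, e1, hk2, h2k, h2k1]; ring
    · rw [hk2, hsucc]; linear_combination -hcas
    · linarith [hkk]
    · rw [show (k + 1 - 1 : ℤ) = k by ring]; linarith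
    · intro _
      rw [show (k + 1 - 1 : ℤ) = k by ring]; exact ha1
    · rw [hk2, hsucc]
      rcases Int.units_eq_one_or (Int.negOnePow k) with hu | hu
      · have hu' : (Int.negOnePow k : ℤ) = 1 := by rw [hu]; simp
        have hp := hpar hu'
        rw [hu']
        linarith [hkk, hp]
      · have hu' : (Int.negOnePow k : ℤ) = -1 := by rw [hu]; simp
        rw [hu']
        linarith [hkk, hk1]
  have bundle : ∀ k : ℤ, 1 ≤ k →
      F (2 * k) = F k * (2 * F (k + 1) - F k) ∧
      F (2 * k + 1) = F k ^ 2 + F (k + 1) ^ 2 ∧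
      F (k + 1) ^ 2 - F (k + 1) * F k - F k ^ 2 = (Int.negOnePow k : ℤ) ∧
      1 ≤ F k ∧ 0 ≤ F (k - 1) ∧
      ((Int.negOnePow k : ℤ) = 1 → 1 ≤ F (k - 1)) ∧
      F (k + 1) - 2 * F k < 1 + (Int.negOnePow k : ℤ) := by
    intro k hk
    obtain ⟨n, rfl⟩ : ∃ n : ℕ, k = (n : ℤ) + 1 := ⟨(k - 1).toNat, by omega⟩
    clear hk
    induction n with
    | zero =>
      norm_num [hF1, hF2, hF3, hF0, Int.negOnePow_one]
    | succ m ihm =>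
      have h := step ((m : ℤ) + 1) ihm
      push_cast
      convert h using 3 <;> push_cast <;> ring
  -- main argument
  intro k hk
  obtain ⟨h2k, h2k1, hcas, ha1, hk1, hpar, hlt⟩ := bundle k hk
  set a := F k with ha
  set b := F (k + 1) with hb
  set c := (Int.negOnePow k : ℤ) with hc
  have hA : F (k + 2) = a + b := by rw [hF' k]; ring
  have hD : F (2 * k + 2) = b ^ 2 + 2 * a * b := by
    have h := hF' (2 * k)
    rw [h, h2k, h2k1]; ring
  have hE : F (2 * k - 1) = F (2 * k + 1) - F (2 * k) := by
    have h := hFrec (2 * k + 1)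
    simp only [show (2 * k + 1 - 1 : ℤ) = 2 * k by ring,
      show (2 * k + 1 - 2 : ℤ) = 2 * k - 1 by ring] at h
    linarith
  have hF2' : F (2 * k - 2) = F (2 * k) - F (2 * k - 1) := by
    have h := hFrec (2 * k)
    linarith
  have hG : F (2 * k - 3) = F (2 * k - 1) - F (2 * k - 2) := by
    have h := hFrec (2 * k - 1)
    simp only [show (2 * k - 1 - 1 : ℤ) = 2 * k - 2 by ring,
      show (2 * k - 1 - 2 : ℤ) = 2 * k - 3 by ring] at h
    linarith
  have hH : L (2 * k - 2) = 7 * a ^ 2 - 8 * a * b + 3 * b ^ 2 := by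
    rw [hL (2 * k - 2), show (2 * k - 2 + 1 : ℤ) = 2 * k - 1 by ring,
      show (2 * k - 2 - 1 : ℤ) = 2 * k - 3 by ring, hG, hF2', hE, h2k, h2k1]
    ring
  have hI : F (-k) = -c * a := hFneg k
  have hcas' : b ^ 2 - b * a - a ^ 2 = c := hcas
  constructor
  · rw [hD, hA, h2k, hH, hI]
    linear_combination (3 - 5 * a) * hcas'
  · have key : 5 * ((F (2 * k + 2) - F (k + 2) - 1) * a - (F (k + 2) - 1) * F (2 * k))
        = 5 * a * (b - 2 * a - 1 - c) := by
      rw [hD, hA, h2k]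
      linear_combination (-5 * a) * hcas'
    nlinarith [key, ha1, hlt]
end
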